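/- Let Φ : [0,1] → ℝ be integrable, γ > 0, and φ_{n+1} = ∫₀^1 t^{n+γ-1} Φ(t) dt for n ≥ 0. Then Δ^k{(n+γ)_{k-1} φ_{n+1}} = (-1)^k (n+γ)_{k-1} ∫₀^1 t^{n+γ-1} · ₂F₁(-k, k+n+γ-1; n+γ; t) · Φ(t) dt. -/

import Mathlib

open MeasureTheory intervalIntegral Finset

/-- Pochhammer symbol `(a)_m = a (a+1) ⋯ (a+m-1)` for real `a`. -/
noncomputable def poch (a : ℝ) (m : ℕ) : ℝ := ∏ i ∈ Finset.range m, (a + i)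

/-- Forward difference operator in `n`. -/
def fdiff (g : ℕ → ℝ) : ℕ → ℝ := fun n => g (n + 1) - g n

/-- The terminating Gauss hypergeometric polynomial
`₂F₁(-k, b; c; t) = ∑_{j=0}^k ((-k)_j (b)_j / (c)_j) t^j / j!`. -/
noncomputable def twoF1 (k : ℕ) (b c t : ℝ) : ℝ :=
  ∑ j ∈ Finset.range (k + 1),
    poch (-(k : ℝ)) j * poch b j / (poch c j * (Nat.factorial j)) * t ^ j

/-! Expanding `Δ^k` by the binomial formula lets it pass under the integral defining `φ`, so
everything reduces to the pointwise identity for `Δ^k{(m+γ)_{k-1} t^{m+γ-1}}` at `m = n`.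
With `a = n + γ` and `K = k - 1`, its `j`-th binomial term `(-1)^{k-j} C(k,j) (a+j)_K t^{a+j-1}`
is the `j`-th term of `(-1)^k (a)_K t^{a-1} ₂F₁(-k, a+K; a; t)`, because
`(-k)_j = (-1)^j k!/(k-j)!` and `(a)_K (a+K)_j = (a)_{K+j} = (a)_j (a+j)_K`. -/

lemma poch_add (a : ℝ) (m l : ℕ) : poch a (m + l) = poch a m * poch (a + m) l := by
  simp only [poch, prod_range_add, Nat.cast_add, add_assoc]

lemma poch_pos {a : ℝ} (ha : 0 < a) (m : ℕ) : 0 < poch a m :=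
  prod_pos fun _ _ => by positivity

lemma poch_neg_natCast (k j : ℕ) : poch (-(k : ℝ)) j = (-1) ^ j * k.descFactorial j := by
  rw [← descPochhammer_eval_eq_descFactorial, descPochhammer_eval_eq_prod_range, poch,
    show (-1 : ℝ) ^ j = ∏ _ ∈ range j, -1 by simp, ← prod_mul_distrib]
  exact prod_congr rfl fun _ _ => by ring

lemma fdiff_iterate_apply (g : ℕ → ℝ) (k n : ℕ) :
    fdiff^[k] g n = ∑ j ∈ range (k + 1), (-1) ^ (k - j) * k.choose j * g (n + j) := by
  simp [show fdiff = fwdDiff 1 from rfl, fwdDiff_iter_eq_sum_shift]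

lemma fdiff_iterate_const_mul (c : ℝ) (g : ℕ → ℝ) (k n : ℕ) :
    fdiff^[k] (fun m => c * g m) n = c * fdiff^[k] g n :=
  congrFun (fwdDiff_iter_const_smul 1 c g k) n

lemma fdiff_iterate_intervalIntegral {f : ℕ → ℝ → ℝ} {a b : ℝ}
    (hf : ∀ m, IntervalIntegrable (f m) volume a b) (k n : ℕ) :
    fdiff^[k] (fun m => ∫ t in a..b, f m t) n = ∫ t in a..b, fdiff^[k] (fun m => f m t) n := by
  simp only [fdiff_iterate_apply]
  rw [integral_finsetSum fun j _ => (hf (n + j)).const_mul _]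
  simp only [intervalIntegral.integral_const_mul]

lemma fdiff_iterate_comp_add (g : ℕ → ℝ) (k n : ℕ) :
    fdiff^[k] (fun m => g (m + n)) 0 = fdiff^[k] g n := by
  simp [fdiff_iterate_apply, add_comm]

lemma fdiff_iterate_poch_mul_pow {a : ℝ} (ha : 0 < a) (K k : ℕ) (t : ℝ) :
    (fdiff^[k] fun m : ℕ => poch (a + m) K * t ^ m) 0
      = (-1) ^ k * poch a K * twoF1 k (a + K) a t := by
  rw [fdiff_iterate_apply, twoF1, mul_sum]
  refine sum_congr rfl fun j hj => ?_
  have hjk : j ≤ k := Nat.lt_succ_iff.mp (mem_range.mp hj)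
  have hsign : (-1 : ℝ) ^ k = (-1) ^ (k - j) * (-1) ^ j := by
    rw [← pow_add, Nat.sub_add_cancel hjk]
  have hsq : (-1 : ℝ) ^ j * (-1) ^ j = 1 := by rw [← mul_pow]; norm_num
  have hswap : poch a K * poch (a + K) j = poch a j * poch (a + j) K := by
    rw [← poch_add, ← poch_add, add_comm]
  have hcoef : poch a K * (poch (-(k : ℝ)) j * poch (a + K) j / (poch a j * j.factorial))
      = (-1) ^ j * k.choose j * poch (a + j) K := by
    rw [poch_neg_natCast, Nat.descFactorial_eq_factorial_mul_choose, ← mul_div_assoc,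
      div_eq_iff (by have := poch_pos ha j; positivity)]
    push_cast
    linear_combination (-1) ^ j * (j.factorial : ℝ) * k.choose j * hswap
  rw [zero_add, hsign]
  linear_combination (-((-1) ^ (k - j) * (-1) ^ j * t ^ j)) * hcoef
    - (-1) ^ (k - j) * (k.choose j : ℝ) * poch (a + j) K * t ^ j * hsq

lemma fdiff_iterate_poch_mul_rpow {c t : ℝ} (ht : 0 < t) (K k n : ℕ) (hc : 0 < n + c) :
    (fdiff^[k] fun m : ℕ => poch (m + c) K * t ^ ((m : ℝ) + c - 1)) n
      = (-1) ^ k * poch (n + c) K * t ^ ((n : ℝ) + c - 1) * twoF1 k (n + c + K) (n + c) t := by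
  have hshift : ∀ m : ℕ, poch (((m + n : ℕ) : ℝ) + c) K * t ^ (((m + n : ℕ) : ℝ) + c - 1)
      = t ^ ((n : ℝ) + c - 1) * (poch (n + c + m) K * t ^ m) := fun m => by
    rw [show ((m + n : ℕ) : ℝ) + c - 1 = n + c - 1 + m by push_cast; ring, Real.rpow_add ht,
      Real.rpow_natCast, show ((m + n : ℕ) : ℝ) + c = n + c + m by push_cast; ring]
    ring
  rw [← fdiff_iterate_comp_add]
  simp only [hshift, fdiff_iterate_const_mul, fdiff_iterate_poch_mul_pow hc]
  ring

theorem fdiff_convergingFactor_integralRep_general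
    (Φ : ℝ → ℝ)
    (γ : ℝ) (hγ : 0 < γ)
    (hint : ∀ n : ℕ, IntervalIntegrable (fun t : ℝ => t ^ ((n : ℝ) + γ - 1) * Φ t) volume 0 1)
    (φ : ℕ → ℝ)
    (hφ : ∀ n : ℕ, φ (n + 1) = ∫ t in (0:ℝ)..1, t ^ ((n : ℝ) + γ - 1) * Φ t)
    (k n : ℕ) (hk : 1 ≤ k) :
    (fdiff^[k] (fun m : ℕ => poch ((m : ℝ) + γ) (k - 1) * φ (m + 1))) n
      = (-1 : ℝ) ^ k * poch ((n : ℝ) + γ) (k - 1) *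
          ∫ t in (0:ℝ)..1,
            t ^ ((n : ℝ) + γ - 1) * twoF1 k ((k : ℝ) + n + γ - 1) ((n : ℝ) + γ) t * Φ t := by
  have hrep : (fun m : ℕ => poch ((m : ℝ) + γ) (k - 1) * φ (m + 1))
      = fun m : ℕ => ∫ t in (0:ℝ)..1, poch ((m : ℝ) + γ) (k - 1) * (t ^ ((m : ℝ) + γ - 1) * Φ t) :=
    funext fun m => by rw [hφ, intervalIntegral.integral_const_mul]
  have hb : (k : ℝ) + n + γ - 1 = n + γ + (k - 1 : ℕ) := by
    rw [Nat.cast_sub hk]; push_cast; ring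
  rw [hrep, fdiff_iterate_intervalIntegral fun m => (hint m).const_mul _,
    ← intervalIntegral.integral_const_mul]
  refine integral_congr_ae (Filter.Eventually.of_forall fun t ht => ?_)
  have ht0 : 0 < t := (Set.uIoc_of_le (zero_le_one' ℝ) ▸ ht).1
  calc (fdiff^[k] fun m : ℕ => poch ((m : ℝ) + γ) (k - 1) * (t ^ ((m : ℝ) + γ - 1) * Φ t)) n
      = Φ t * (fdiff^[k] fun m : ℕ => poch ((m : ℝ) + γ) (k - 1) * t ^ ((m : ℝ) + γ - 1)) n := by
        rw [← fdiff_iterate_const_mul]; simp only [mul_comm (Φ t), mul_assoc]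
    _ = _ := by rw [fdiff_iterate_poch_mul_rpow ht0 _ _ _ (by positivity), hb]; ring

theorem fdiff_convergingFactor_integralRep
    (Φ : ℝ → ℝ) (hΦ : IntervalIntegrable Φ volume 0 1)
    (γ : ℝ) (hγ : 0 < γ)
    (hint : ∀ n : ℕ, IntervalIntegrable (fun t : ℝ => t ^ ((n : ℝ) + γ - 1) * Φ t) volume 0 1)
    (φ : ℕ → ℝ)
    (hφ : ∀ n : ℕ, φ (n + 1) = ∫ t in (0:ℝ)..1, t ^ ((n : ℝ) + γ - 1) * Φ t)
    (k n : ℕ) (hk : 1 ≤ k) :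
    (fdiff^[k] (fun m : ℕ => poch ((m : ℝ) + γ) (k - 1) * φ (m + 1))) n
      = (-1 : ℝ) ^ k * poch ((n : ℝ) + γ) (k - 1) *
          ∫ t in (0:ℝ)..1,
            t ^ ((n : ℝ) + γ - 1) * twoF1 k ((k : ℝ) + n + γ - 1) ((n : ℝ) + γ) t * Φ t :=
  fdiff_convergingFactor_integralRep_general Φ γ hγ hint φ hφ k n hk
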